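/- arXiv:2109.10426 — 2 statements merged into one kernel-verified Lean document; each statement's English description precedes it below -/
import Mathlib

section
/- Let a, w ∈ ℂ and τ > 0. Then every z ∈ ℂ with z + a − w·exp(−τ·z) = 0 satisfies Re(z) < 0 if and only if one of the following holds: (i) Re(a) > |w|; (ii) −|w| < Re(a) ≤ |w| and arccos(cos(τ·Im(a) + Arg(w))) > arccos(Re(a)/|w|) + τ·√(|w|² − Re(a)²). -/
/-!
Write a root as `z = x + iy`. The equation says `z + a = ρ e^{iθ}` with `ρ = |w| e^{-τx}` and
`θ = Arg w - τy`, so `x + Re a = ρ cos θ` and `τ Im a + Arg w = θ + τ ρ sin θ`. Hence the distance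
`arccos (cos (τ Im a + Arg w))` of `τ Im a + Arg w` from `2πℤ` is at most
`|θ| + τ ρ |sin θ| = phaseBound x`, and any `x` with `|x + Re a| ≤ ρ` at which equality holds
carries a root (take `θ = ± arccos ((x + Re a) / ρ)`).

As `x ≥ 0` grows, `phaseBound` decreases while `|x + Re a| < ρ`, is `π` where `x + Re a ≤ -ρ` and
`0` where `x + Re a = ρ`. So a root with `Re z ≥ 0` exists iff
`arccos (cos (τ Im a + Arg w)) ≤ phaseBound 0 = arccos (Re a / |w|) + τ √(|w|² - (Re a)²)`.
-/

open Real Set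

namespace Real

theorem arccos_cos_eq_abs_toReal (θ : ℝ) : arccos (cos θ) = |(θ : Angle).toReal| := by
  rw [← Angle.cos_coe, ← Angle.cos_toReal, ← cos_abs,
    arccos_cos (abs_nonneg _) (Angle.abs_toReal_le_pi _)]

theorem arccos_cos_le_abs (θ : ℝ) : arccos (cos θ) ≤ |θ| := by
  rw [← cos_abs]
  rcases le_or_gt |θ| π with h | h
  · rw [arccos_cos (abs_nonneg θ) h]
  · exact (arccos_le_pi _).trans h.le

/-- `arccos ∘ cos` is the distance to `2πℤ`, hence `1`-Lipschitz. -/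
theorem arccos_cos_add_le (θ t : ℝ) : arccos (cos (θ + t)) ≤ arccos (cos θ) + |t| := by
  have hcos : cos (θ + t) = cos ((θ : Angle).toReal + t) := by
    rw [← Angle.cos_coe, ← Angle.cos_coe, Angle.coe_add, Angle.coe_add, Angle.coe_toReal]
  rw [hcos, arccos_cos_eq_abs_toReal θ]
  exact (arccos_cos_le_abs _).trans (abs_add_le _ _)

theorem exists_mul_cos_eq_and_add_mul_sin_eq {ρ s k t : ℝ} (hρ : 0 < ρ) (hs : |s| ≤ ρ)
    (ht : |t| = arccos (s / ρ) + k * √(ρ ^ 2 - s ^ 2)) :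
    ∃ θ, ρ * cos θ = s ∧ θ + k * (ρ * sin θ) = t := by
  have hsρ : |s / ρ| ≤ 1 := by rw [abs_div, abs_of_pos hρ]; exact div_le_one_of_le₀ hs hρ.le
  have hcos : ρ * cos (arccos (s / ρ)) = s := by
    rw [cos_arccos (abs_le.1 hsρ).1 (abs_le.1 hsρ).2]; field_simp
  have hsin : ρ * sin (arccos (s / ρ)) = √(ρ ^ 2 - s ^ 2) := by
    rw [sin_arccos, show ρ ^ 2 - s ^ 2 = ρ ^ 2 * (1 - (s / ρ) ^ 2) by field_simp,
      sqrt_mul (sq_nonneg ρ), sqrt_sq hρ.le]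
  rcases abs_cases t with ⟨htt, -⟩ | ⟨htt, -⟩
  · exact ⟨arccos (s / ρ), hcos, by rw [hsin]; linarith⟩
  · refine ⟨-arccos (s / ρ), by rwa [cos_neg], ?_⟩
    rw [sin_neg, mul_neg, hsin]; linarith

end Real

namespace DelayEquation

/-- For a root with real part `x` of `z + a = w e^{-τz}` (with `R = |w|`, `c = Re a`), `z + a` has
modulus `ρ = R e^{-τx}` and real part `x + c`; `phaseBound τ R c x` is `|θ| + τ ρ |sin θ|` for its
argument `θ`. Outside `|x + c| ≤ ρ` the clamping of `arccos` and `√` makes it `0` or `π`. -/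
noncomputable def phaseBound (τ R c x : ℝ) : ℝ :=
  arccos ((x + c) / (R * exp (-(τ * x)))) + τ * √((R * exp (-(τ * x))) ^ 2 - (x + c) ^ 2)

variable {τ R c : ℝ}

theorem phaseBound_zero : phaseBound τ R c 0 = arccos (c / R) + τ * √(R ^ 2 - c ^ 2) := by
  simp [phaseBound]

theorem phaseBound_of_le_neg {x : ℝ} (hR : 0 < R) (h : x + c ≤ -(R * exp (-(τ * x)))) :
    phaseBound τ R c x = π := by
  have hρ : 0 < R * exp (-(τ * x)) := by positivity
  have h1 : (x + c) / (R * exp (-(τ * x))) ≤ -1 := by rw [div_le_iff₀ hρ]; linarith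
  rw [phaseBound, arccos_eq_pi.2 h1, sqrt_eq_zero_of_nonpos (by nlinarith), mul_zero, add_zero]

theorem phaseBound_of_eq {x : ℝ} (hR : 0 < R) (h : x + c = R * exp (-(τ * x))) :
    phaseBound τ R c x = 0 := by
  have hρ : 0 < R * exp (-(τ * x)) := by positivity
  rw [phaseBound, h, div_self hρ.ne', arccos_one, sub_self, sqrt_zero, mul_zero, add_zero]

theorem continuous_phaseBound (hR : 0 < R) : Continuous (phaseBound τ R c) := by
  have hρ : ∀ x, R * exp (-(τ * x)) ≠ 0 := fun x => by positivity
  unfold phaseBound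
  fun_prop (disch := exact hρ _)

theorem hasDerivAt_phaseBound {x : ℝ} (hR : 0 < R) (h : |x + c| < R * exp (-(τ * x))) :
    HasDerivAt (phaseBound τ R c)
      (-((1 + τ * (x + c)) ^ 2 + τ ^ 2 * ((R * exp (-(τ * x))) ^ 2 - (x + c) ^ 2)) /
        √((R * exp (-(τ * x))) ^ 2 - (x + c) ^ 2)) x := by
  set ρ := R * exp (-(τ * x)) with hρdef
  have hρ : 0 < ρ := by positivity
  have hρd : HasDerivAt (fun y => R * exp (-(τ * y))) (-τ * ρ) x := by
    refine ((((hasDerivAt_id' x).const_mul τ).fun_neg.exp).const_mul R).congr_deriv ?_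
    rw [hρdef]; ring
  have hs : HasDerivAt (fun y => y + c) 1 x := (hasDerivAt_id x).add_const c
  have hlt : 0 < ρ ^ 2 - (x + c) ^ 2 := by
    obtain ⟨h1, h2⟩ := abs_lt.1 h; nlinarith
  have habs : |(x + c) / ρ| < 1 := by
    rw [abs_div, abs_of_pos hρ, div_lt_one hρ]; exact h
  have hA := (hasDerivAt_arccos (abs_lt.1 habs).1.ne' (abs_lt.1 habs).2.ne).comp x
    (hs.div hρd hρ.ne')
  have hS := (((hρd.fun_pow 2).sub (hs.fun_pow 2)).sqrt hlt.ne').const_mul τ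
  refine (hA.add hS).congr_deriv ?_
  have hsqrt : √(1 - ((x + c) / ρ) ^ 2) = √(ρ ^ 2 - (x + c) ^ 2) / ρ := by
    rw [show 1 - ((x + c) / ρ) ^ 2 = (ρ ^ 2 - (x + c) ^ 2) / ρ ^ 2 by field_simp,
      sqrt_div hlt.le, sqrt_sq hρ.le]
  have hsqrt_pos : 0 < √(ρ ^ 2 - (x + c) ^ 2) := sqrt_pos.2 hlt
  simp only [Pi.sub_apply, ← hρdef]
  rw [hsqrt]
  field_simp
  ring

theorem antitoneOn_phaseBound {p q : ℝ} (hR : 0 < R)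
    (h : ∀ x ∈ Ioo p q, |x + c| < R * exp (-(τ * x))) :
    AntitoneOn (phaseBound τ R c) (Icc p q) := by
  refine antitoneOn_of_deriv_nonpos (convex_Icc p q) (continuous_phaseBound hR).continuousOn
    (fun x hx => ?_) (fun x hx => ?_) <;> rw [interior_Icc] at hx
  · exact (hasDerivAt_phaseBound hR (h x hx)).differentiableAt.differentiableWithinAt
  · have hρ : |x + c| ≤ |R * exp (-(τ * x))| := by
      rw [abs_of_pos (a := R * exp (-(τ * x))) (by positivity)]; exact (h x hx).le
    have hD := mul_nonneg (sq_nonneg τ) (sub_nonneg.2 (sq_le_sq.2 hρ))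
    rw [(hasDerivAt_phaseBound hR (h x hx)).deriv]
    exact div_nonpos_of_nonpos_of_nonneg
      (by nlinarith [sq_nonneg (1 + τ * (x + c))]) (sqrt_nonneg _)

theorem strictMono_add_sub_mul_exp (hτ : 0 ≤ τ) (hR : 0 ≤ R) :
    StrictMono fun x => x + c - R * exp (-(τ * x)) := by
  refine (strictMono_id.add_const c).add_monotone fun x y hxy => ?_
  have : exp (-(τ * y)) ≤ exp (-(τ * x)) := exp_le_exp.2 (by nlinarith)
  simp only [neg_le_neg_iff]
  exact mul_le_mul_of_nonneg_left this hR

theorem min_pi_phaseBound_le {x : ℝ} (hτ : 0 ≤ τ) (hR : 0 < R) (hx : 0 ≤ x)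
    (hxc : x + c ≤ R * exp (-(τ * x))) : min π (phaseBound τ R c x) ≤ phaseBound τ R c 0 := by
  have hupper : ∀ y < x, y + c < R * exp (-(τ * y)) := fun y hy => by
    have := strictMono_add_sub_mul_exp (c := c) hτ hR.le hy
    linarith
  by_cases hdip : ∃ d ∈ Icc 0 x, d + c ≤ -(R * exp (-(τ * d)))
  · -- `phaseBound` is antitone up to the first such `d`, where it equals `π`
    obtain ⟨e, ⟨he, hedip⟩, hmin⟩ := (isCompact_Icc.inter_right (isClosed_le
      (f := fun d => d + c) (g := fun d => -(R * exp (-(τ * d)))) (by fun_prop) (by fun_prop))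
      ).exists_isLeast (let ⟨d, hd, hdc⟩ := hdip; ⟨d, hd, hdc⟩)
    have hlower : ∀ y ∈ Ioo 0 e, -(R * exp (-(τ * y))) < y + c := fun y hy => by
      by_contra! hy'
      exact (hmin ⟨⟨hy.1.le, hy.2.le.trans he.2⟩, hy'⟩ : e ≤ y).not_gt hy.2
    calc min π (phaseBound τ R c x) ≤ phaseBound τ R c e :=
          (phaseBound_of_le_neg hR hedip).symm ▸ min_le_left _ _
      _ ≤ phaseBound τ R c 0 :=
          antitoneOn_phaseBound hR (fun y hy => abs_lt.2 ⟨hlower y hy,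
            hupper y (hy.2.trans_le he.2)⟩) ⟨le_rfl, he.1⟩ ⟨he.1, le_rfl⟩ he.1
  · push Not at hdip
    calc min π (phaseBound τ R c x) ≤ phaseBound τ R c x := min_le_right _ _
      _ ≤ phaseBound τ R c 0 :=
          antitoneOn_phaseBound hR (fun y hy => abs_lt.2 ⟨hdip y (Ioo_subset_Icc_self hy),
            hupper y hy.2⟩) ⟨le_rfl, hx⟩ ⟨hx, le_rfl⟩ hx

theorem exists_add_eq_mul_exp (hτ : 0 ≤ τ) (hR : 0 ≤ R) (hc : c ≤ R) :
    ∃ x, 0 ≤ x ∧ x + c = R * exp (-(τ * x)) := by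
  have hf0 : 0 + c - R * exp (-(τ * 0)) ≤ 0 := by simpa using hc
  have hf1 : 0 ≤ (R - c) + c - R * exp (-(τ * (R - c))) := by
    have : exp (-(τ * (R - c))) ≤ 1 := exp_le_one_iff.2 (by nlinarith)
    nlinarith
  obtain ⟨x, hx, hfx⟩ : ∃ x ∈ Icc 0 (R - c), x + c - R * exp (-(τ * x)) = 0 :=
    intermediate_value_Icc (sub_nonneg.2 hc) (by fun_prop) ⟨hf0, hf1⟩
  exact ⟨x, hx.1, by linarith⟩

theorem exists_phaseBound_eq {A : ℝ} (hτ : 0 ≤ τ) (hR : 0 < R) (hc : c ≤ R) (hA₀ : 0 ≤ A)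
    (hA : A ≤ phaseBound τ R c 0) :
    ∃ x, 0 ≤ x ∧ |x + c| ≤ R * exp (-(τ * x)) ∧ phaseBound τ R c x = A := by
  obtain ⟨x₁, hx₁, hx₁c⟩ := exists_add_eq_mul_exp hτ hR.le hc
  obtain ⟨x, hx, hGx⟩ := intermediate_value_Icc' hx₁ (continuous_phaseBound hR).continuousOn
    ⟨(phaseBound_of_eq hR hx₁c).symm ▸ hA₀, hA⟩
  have hupper : x + c ≤ R * exp (-(τ * x)) := by
    have := (strictMono_add_sub_mul_exp (c := c) hτ hR.le).monotone hx.2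
    linarith
  by_cases hlower : -(R * exp (-(τ * x))) ≤ x + c
  · exact ⟨x, hx.1, abs_le.2 ⟨hlower, hupper⟩, hGx⟩
  -- here `A = phaseBound x = π`; move right to a point where `x + c = -ρ` exactly
  push Not at hlower
  obtain ⟨x', hx', hx'c⟩ : ∃ x' ∈ Icc x x₁, x' + c + R * exp (-(τ * x')) = 0 :=
    intermediate_value_Icc hx.2 (by fun_prop) ⟨by linarith, by rw [hx₁c]; positivity⟩
  replace hx'c : x' + c = -(R * exp (-(τ * x'))) := by linarith
  refine ⟨x', hx.1.trans hx'.1, by rw [hx'c, abs_neg, abs_of_pos (by positivity)], ?_⟩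
  rw [phaseBound_of_le_neg hR hx'c.le, ← hGx, phaseBound_of_le_neg hR hlower.le]

variable {a w z : ℂ}

theorem root_iff_polar :
    z + a - w * Complex.exp (-(τ : ℂ) * z) = 0 ↔
      z.re + a.re = ‖w‖ * exp (-(τ * z.re)) * cos (w.arg - τ * z.im) ∧
        z.im + a.im = ‖w‖ * exp (-(τ * z.re)) * sin (w.arg - τ * z.im) := by
  have hre := Complex.norm_mul_cos_arg w
  have him := Complex.norm_mul_sin_arg w
  rw [sub_eq_zero, Complex.ext_iff]
  simp only [Complex.add_re, Complex.add_im, Complex.mul_re, Complex.mul_im, Complex.exp_re,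
    Complex.exp_im, Complex.neg_re, Complex.neg_im, Complex.ofReal_re, Complex.ofReal_im,
    cos_sub, sin_sub, ← hre, ← him]
  ring_nf
  rw [cos_neg, sin_neg]
  ring_nf

theorem re_add_le_of_root (hz : z + a - w * Complex.exp (-(τ : ℂ) * z) = 0) :
    z.re + a.re ≤ ‖w‖ * exp (-(τ * z.re)) := by
  rw [(root_iff_polar.1 hz).1]
  exact mul_le_of_le_one_right (by positivity) (cos_le_one _)

theorem re_neg_of_root (hτ : 0 ≤ τ) (ha : ‖w‖ < a.re)
    (hz : z + a - w * Complex.exp (-(τ : ℂ) * z) = 0) : z.re < 0 := by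
  by_contra! hx
  have : ‖w‖ * exp (-(τ * z.re)) ≤ ‖w‖ :=
    mul_le_of_le_one_right (norm_nonneg w) (exp_le_one_iff.2 (by nlinarith))
  linarith [re_add_le_of_root hz]

theorem arccos_cos_le_phaseBound_of_root (hτ : 0 ≤ τ) (hw : w ≠ 0)
    (hz : z + a - w * Complex.exp (-(τ : ℂ) * z) = 0) :
    arccos (cos (τ * a.im + w.arg)) ≤ phaseBound τ ‖w‖ a.re z.re := by
  obtain ⟨hre, him⟩ := root_iff_polar.1 hz
  set ρ := ‖w‖ * exp (-(τ * z.re))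
  set θ := w.arg - τ * z.im
  have hρ : 0 < ρ := by have := norm_pos_iff.2 hw; positivity
  have hphase : τ * a.im + w.arg = θ + τ * (ρ * sin θ) := by rw [← him]; ring
  have hcos : (z.re + a.re) / ρ = cos θ := by rw [hre]; field_simp
  have hsin : √(ρ ^ 2 - (z.re + a.re) ^ 2) = |ρ * sin θ| := by
    rw [hre, ← sqrt_sq_eq_abs]
    congr 1
    linear_combination -ρ ^ 2 * sin_sq_add_cos_sq θ
  calc arccos (cos (τ * a.im + w.arg)) = arccos (cos (θ + τ * (ρ * sin θ))) := by rw [hphase]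
    _ ≤ arccos (cos θ) + |τ * (ρ * sin θ)| := arccos_cos_add_le _ _
    _ = phaseBound τ ‖w‖ a.re z.re := by
      rw [phaseBound, hcos, hsin, abs_mul, abs_of_nonneg hτ]

theorem exists_root_of_phaseBound_eq {x : ℝ} (hw : w ≠ 0)
    (hx : |x + a.re| ≤ ‖w‖ * exp (-(τ * x)))
    (hG : phaseBound τ ‖w‖ a.re x = arccos (cos (τ * a.im + w.arg))) :
    ∃ z : ℂ, z + a - w * Complex.exp (-(τ : ℂ) * z) = 0 ∧ z.re = x := by
  set ρ := ‖w‖ * exp (-(τ * x))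
  set θ₀ := τ * a.im + w.arg
  have hρ : 0 < ρ := by have := norm_pos_iff.2 hw; positivity
  obtain ⟨θ, hcos, hθ⟩ := exists_mul_cos_eq_and_add_mul_sin_eq hρ hx
    (t := (θ₀ : Angle).toReal) (k := τ) (by rw [← arccos_cos_eq_abs_toReal, ← hG]; rfl)
  set y := ρ * sin θ - a.im
  have hangle : ((w.arg - τ * y : ℝ) : Angle) = θ := by
    rw [show w.arg - τ * y = θ₀ - (θ₀ : Angle).toReal + θ by simp only [y, θ₀]; linarith,
      Angle.coe_add, Angle.coe_sub, Angle.coe_toReal, sub_self, zero_add]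
  refine ⟨⟨x, y⟩, root_iff_polar.2 ⟨?_, ?_⟩, rfl⟩
  · rw [← Angle.cos_coe, hangle, Angle.cos_coe]; linarith
  · rw [← Angle.sin_coe, hangle, Angle.sin_coe]; simp only [y]; ring

theorem exists_root_re_nonneg_iff (hτ : 0 ≤ τ) (hw : w ≠ 0) (ha : a.re ≤ ‖w‖) :
    (∃ z : ℂ, z + a - w * Complex.exp (-(τ : ℂ) * z) = 0 ∧ 0 ≤ z.re) ↔
      arccos (cos (τ * a.im + w.arg)) ≤ phaseBound τ ‖w‖ a.re 0 := by
  have hR := norm_pos_iff.2 hw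
  constructor
  · rintro ⟨z, hz, hx⟩
    calc arccos (cos (τ * a.im + w.arg)) ≤ min π (phaseBound τ ‖w‖ a.re z.re) :=
          le_min (arccos_le_pi _) (arccos_cos_le_phaseBound_of_root hτ hw hz)
      _ ≤ phaseBound τ ‖w‖ a.re 0 := min_pi_phaseBound_le hτ hR hx (re_add_le_of_root hz)
  · intro hA
    obtain ⟨x, hx, hxa, hG⟩ := exists_phaseBound_eq hτ hR ha (arccos_nonneg _) hA
    obtain ⟨z, hz, rfl⟩ := exists_root_of_phaseBound_eq hw hxa hG
    exact ⟨z, hz, hx⟩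

end DelayEquation

open DelayEquation

/-- Stability criterion for `z + a − w e^{−τz} = 0` with complex `a, w`: all roots have
negative real parts iff either `Re a > |w|`, or `−|w| < Re a ≤ |w|` and
`arccos(cos(τ Im a + Arg w)) > arccos(Re a / |w|) + τ √(|w|² − (Re a)²)`. -/
theorem stability_complex_coefficients (a w : ℂ) (τ : ℝ) (hτ : 0 < τ) :
    (∀ z : ℂ, z + a - w * Complex.exp (-(τ : ℂ) * z) = 0 → z.re < 0) ↔
      (a.re > ‖w‖ ∨
        (-‖w‖ < a.re ∧ a.re ≤ ‖w‖ ∧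
          Real.arccos (Real.cos (τ * a.im + w.arg)) >
            Real.arccos (a.re / ‖w‖) +
              τ * Real.sqrt ((‖w‖) ^ 2 - a.re ^ 2))) := by
  rcases lt_or_ge ‖w‖ a.re with ha | ha
  · exact iff_of_true (fun z hz => re_neg_of_root hτ.le ha hz) (Or.inl ha)
  rcases eq_or_ne w 0 with rfl | hw
  · refine iff_of_false (fun h => ?_) ?_
    · have := h (-a) (by ring)
      simp only [Complex.neg_re, norm_zero] at this ha
      linarith
    · simp only [norm_zero] at ha ⊢
      rintro (h | ⟨h, -⟩) <;> linarith
  have hlower (h : phaseBound τ ‖w‖ a.re 0 < arccos (cos (τ * a.im + w.arg))) :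
      -‖w‖ < a.re := by
    by_contra! hc
    rw [phaseBound_of_le_neg (norm_pos_iff.2 hw) (by simpa using hc)] at h
    exact h.not_ge (arccos_le_pi _)
  rw [← phaseBound_zero]
  calc _ ↔ ¬∃ z : ℂ, z + a - w * Complex.exp (-(τ : ℂ) * z) = 0 ∧ 0 ≤ z.re := by
        simp only [not_exists, not_and, not_le]
    _ ↔ phaseBound τ ‖w‖ a.re 0 < arccos (cos (τ * a.im + w.arg)) :=
        (exists_root_re_nonneg_iff hτ.le hw ha).not.trans not_le
    _ ↔ _ := ⟨fun h => Or.inr ⟨hlower h, ha, h⟩, by rintro (h | ⟨-, -, h⟩) <;> linarith⟩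
end

section
/- Let ψ ∈ (−π, π], τ > 0, a ∈ ℝ, w ∈ ℂ with w ≠ 0 and Re(w) < a < |w|, and s > 0. Define I_c(ψ) := (0, ψ) if ψ ≥ 0 and I_c(ψ) := (ψ, 0) if ψ < 0 (so I_c(0) is empty). Then the following are equivalent: (i) there exists Ω ∈ ℝ with τ·Ω ∈ I_c(ψ), s·a = −Ω·cot(τ·Ω − ψ), and s·w = (−Ω/sin(τ·Ω − ψ))·exp(i·ψ); (ii) s·τ = τ_c(a,w) and Arg(w) = ψ. -/
/-!
Write `r = ‖w‖` and `φ = arccos (a / r)`. For `ψ > 0` a point of the curve has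
`θ = τΩ - ψ ∈ (-π, 0)`, so `sin θ < 0` and `-Ω / sin θ > 0` is the modulus `r` of `w`, while
`a = r cos θ`; hence `θ = -φ` and `Ω = r sin φ = √(r² - a²)`, and `τΩ = ψ - φ` is exactly
`τ = τ_c(a, w)`. The case `ψ < 0` is the mirror image under `Ω ↦ -Ω`, `w ↦ conj w`, and the
scaling by `s` is absorbed because `τ_c` is homogeneous of degree `-1`.
-/

open Complex ComplexConjugate Set
open scoped Real

noncomputable section

-- `I_c(ψ)`, `τ_c(a, w)` and `Γ_c(ψ; τ)`
def criticalInterval (ψ : ℝ) : Set ℝ :=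
  if 0 ≤ ψ then Ioo 0 ψ else Ioo ψ 0

def criticalDelay (a : ℝ) (w : ℂ) : ℝ :=
  (|w.arg| - Real.arccos (a / ‖w‖)) / Real.sqrt (‖w‖ ^ 2 - a ^ 2)

def criticalCurve (ψ τ : ℝ) : Set (ℝ × ℂ) :=
  {p | ∃ Ω : ℝ, τ * Ω ∈ criticalInterval ψ ∧ p.1 = -Ω * Real.cot (τ * Ω - ψ) ∧
    p.2 = ((-Ω / Real.sin (τ * Ω - ψ) : ℝ) : ℂ) * exp (I * ψ)}

end

lemma neg_mem_criticalInterval_neg {ψ x : ℝ} (hx : x ∈ criticalInterval ψ) :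
    -x ∈ criticalInterval (-ψ) := by
  unfold criticalInterval at *
  split_ifs at * <;> simp only [mem_Ioo] at * <;> constructor <;> linarith

lemma mk_conj_mem_criticalCurve_neg {ψ τ a : ℝ} {w : ℂ} (h : (a, w) ∈ criticalCurve ψ τ) :
    (a, conj w) ∈ criticalCurve (-ψ) τ := by
  obtain ⟨Ω, hΩ, ha, hw⟩ := h
  dsimp only at ha hw ⊢
  have hθ : τ * -Ω - -ψ = -(τ * Ω - ψ) := by ring
  refine ⟨-Ω, by simpa using neg_mem_criticalInterval_neg hΩ, ?_, ?_⟩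
  · rw [ha, hθ, Real.cot_eq_cos_div_sin, Real.cot_eq_cos_div_sin, Real.cos_neg, Real.sin_neg]
    ring
  · rw [hw, hθ, Real.sin_neg, neg_div_neg_eq, map_mul, conj_ofReal, ← exp_conj, map_mul, conj_I,
      conj_ofReal, ofReal_neg, mul_neg, neg_mul]

lemma mk_conj_mem_criticalCurve_neg_iff {ψ τ a : ℝ} {w : ℂ} :
    (a, conj w) ∈ criticalCurve (-ψ) τ ↔ (a, w) ∈ criticalCurve ψ τ :=
  ⟨fun h => by simpa using mk_conj_mem_criticalCurve_neg h, mk_conj_mem_criticalCurve_neg⟩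

lemma criticalDelay_conj (a : ℝ) (w : ℂ) : criticalDelay a (conj w) = criticalDelay a w := by
  rw [criticalDelay, criticalDelay, norm_conj, arg_conj]
  split_ifs with h <;> simp [h]

lemma criticalDelay_real_mul {s : ℝ} (hs : 0 < s) (a : ℝ) (w : ℂ) :
    criticalDelay (s * a) (s * w) = criticalDelay a w / s := by
  have hsqrt : √((s * ‖w‖) ^ 2 - (s * a) ^ 2) = s * √(‖w‖ ^ 2 - a ^ 2) := by
    rw [show (s * ‖w‖) ^ 2 - (s * a) ^ 2 = s ^ 2 * (‖w‖ ^ 2 - a ^ 2) by ring,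
      Real.sqrt_mul (sq_nonneg s), Real.sqrt_sq hs.le]
  rw [criticalDelay, criticalDelay, arg_real_mul _ hs, norm_mul, norm_real,
    Real.norm_of_nonneg hs.le, mul_div_mul_left _ _ hs.ne', hsqrt, div_div, mul_comm s]

lemma eq_ofReal_mul_exp_I_mul_iff {w : ℂ} {ρ ψ : ℝ} (hρ : 0 < ρ) (hψ : ψ ∈ Ioc (-π) π) :
    w = ρ * exp (I * ψ) ↔ ‖w‖ = ρ ∧ w.arg = ψ := by
  have hψ' : ψ ∈ Ioc (-π) (-π + 2 * π) := by rwa [neg_add_eq_sub, two_mul, add_sub_cancel_right]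
  rw [ext_norm_arg_iff, norm_mul, norm_exp_I_mul_ofReal, norm_real, Real.norm_of_nonneg hρ.le,
    mul_one, arg_real_mul _ hρ, mul_comm, arg_exp_mul_I, (toIocMod_eq_self _).2 hψ']

lemma Real.mul_sin_arccos_div {r : ℝ} (hr : 0 < r) (a : ℝ) :
    r * Real.sin (Real.arccos (a / r)) = √(r ^ 2 - a ^ 2) := by
  rw [Real.sin_arccos, ← Real.sqrt_sq hr.le, ← Real.sqrt_mul (sq_nonneg r), Real.sqrt_sq hr.le]
  congr 1
  field_simp

theorem mk_mem_criticalCurve_iff_of_nonneg {ψ τ a : ℝ} {w : ℂ} (hψ₀ : 0 ≤ ψ) (hψπ : ψ ≤ π)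
    (hτ : 0 < τ) (ha₁ : -‖w‖ < a) (ha₂ : a < ‖w‖) :
    (a, w) ∈ criticalCurve ψ τ ↔ τ = criticalDelay a w ∧ w.arg = ψ := by
  have hr : 0 < ‖w‖ := by linarith
  set φ := Real.arccos (a / ‖w‖) with hφ_def
  set q := √(‖w‖ ^ 2 - a ^ 2) with hq_def
  have hφ₀ : 0 < φ := Real.arccos_pos.2 ((div_lt_one hr).2 ha₂)
  have hφπ : φ < π := Real.arccos_lt_pi.2 ((lt_div_iff₀ hr).2 (by linarith))
  have hcos : Real.cos φ = a / ‖w‖ :=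
    Real.cos_arccos ((le_div_iff₀ hr).2 (by linarith)) ((div_le_one hr).2 ha₂.le)
  have hsin : 0 < Real.sin φ := Real.sin_pos_of_pos_of_lt_pi hφ₀ hφπ
  have hq : ‖w‖ * Real.sin φ = q := Real.mul_sin_arccos_div hr a
  have hq₀ : 0 < q := Real.sqrt_pos.2 (by nlinarith)
  simp only [criticalCurve, criticalInterval, if_pos hψ₀, mem_ofPred_eq, mem_Ioo]
  constructor
  · rintro ⟨Ω, ⟨hτΩ₀, hτΩψ⟩, ha, hw⟩
    have hΩ : 0 < Ω := pos_of_mul_pos_right hτΩ₀ hτ.le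
    set θ := τ * Ω - ψ with hθ
    have hsinθ : Real.sin θ < 0 :=
      Real.sin_neg_of_neg_of_neg_pi_lt (by linarith) (by linarith)
    obtain ⟨hnorm, harg⟩ := (eq_ofReal_mul_exp_I_mul_iff
      (div_pos_of_neg_of_neg (by linarith) hsinθ) ⟨by linarith, hψπ⟩).1 hw
    have hφ : φ = ψ - τ * Ω := by
      rw [← Real.arccos_cos (x := ψ - τ * Ω) (by linarith) (by linarith), ← neg_sub, ← hθ,
        Real.cos_neg, hφ_def, ha, hnorm, Real.cot_eq_cos_div_sin]
      field_simp [hsinθ.ne]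
    have hΩq : q = Ω := by
      rw [← hq, hφ, hnorm, ← neg_sub, ← hθ, Real.sin_neg]
      field_simp [hsinθ.ne]
    refine ⟨?_, harg⟩
    rw [criticalDelay, harg, abs_of_nonneg hψ₀, ← hφ_def, ← hq_def, hφ, hΩq, sub_sub_cancel,
      mul_div_cancel_right₀ τ hΩ.ne']
  · rintro ⟨hτc, harg⟩
    have hτq : τ * q = ψ - φ := by
      rw [hτc, criticalDelay, harg, abs_of_nonneg hψ₀, ← hφ_def, ← hq_def]
      field_simp
    have hθ : τ * q - ψ = -φ := by linarith
    refine ⟨q, ⟨by positivity, by linarith⟩, ?_, ?_⟩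
    · rw [hθ, Real.cot_eq_cos_div_sin, Real.cos_neg, Real.sin_neg, hcos, ← hq]
      field_simp
    · rw [hθ, Real.sin_neg, ← hq, show -(‖w‖ * Real.sin φ) / -Real.sin φ = ‖w‖ by field_simp]
      exact (eq_ofReal_mul_exp_I_mul_iff hr ⟨by linarith, hψπ⟩).2 ⟨rfl, harg⟩

theorem mk_mem_criticalCurve_iff {ψ τ a : ℝ} {w : ℂ} (hψ : ψ ∈ Ioc (-π) π)
    (hτ : 0 < τ) (ha₁ : -‖w‖ < a) (ha₂ : a < ‖w‖) :
    (a, w) ∈ criticalCurve ψ τ ↔ τ = criticalDelay a w ∧ w.arg = ψ := by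
  rcases le_or_gt 0 ψ with hψ₀ | hψ₀
  · exact mk_mem_criticalCurve_iff_of_nonneg hψ₀ hψ.2 hτ ha₁ ha₂
  rw [← mk_conj_mem_criticalCurve_neg_iff, mk_mem_criticalCurve_iff_of_nonneg (by linarith)
    (by linarith [hψ.1]) hτ (by rwa [norm_conj]) (by rwa [norm_conj]), criticalDelay_conj,
    arg_conj]
  split_ifs with h
  · simp only [h]
    constructor <;> rintro ⟨-, h'⟩ <;> linarith [hψ.1]
  · rw [neg_inj]

theorem gamma_c_correspondence_general (ψ : ℝ) (hψ : ψ ∈ Set.Ioc (-Real.pi) Real.pi)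
    (τ : ℝ) (hτ : 0 < τ) (a : ℝ) (w : ℂ)
    (h₁ : w.re < a) (h₂ : a < ‖w‖) (s : ℝ) (hs : 0 < s) :
    (∃ Ω : ℝ, τ * Ω ∈ (if 0 ≤ ψ then Set.Ioo 0 ψ else Set.Ioo ψ 0) ∧
        s * a = -Ω * Real.cot (τ * Ω - ψ) ∧
        (s : ℂ) * w = ((-Ω / Real.sin (τ * Ω - ψ) : ℝ) : ℂ) *
          Complex.exp (Complex.I * (ψ : ℂ))) ↔
      (s * τ = (|w.arg| - Real.arccos (a / ‖w‖)) /
          Real.sqrt ((‖w‖) ^ 2 - a ^ 2) ∧ w.arg = ψ) := by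
  have ha : -‖w‖ < a := by linarith [neg_abs_le w.re, abs_re_le_norm w]
  have hnorm : ‖(s : ℂ) * w‖ = s * ‖w‖ := by
    rw [norm_mul, norm_real, Real.norm_of_nonneg hs.le]
  change (s * a, (s : ℂ) * w) ∈ criticalCurve ψ τ ↔ s * τ = criticalDelay a w ∧ w.arg = ψ
  rw [mk_mem_criticalCurve_iff hψ hτ (by rw [hnorm, ← mul_neg]; exact mul_lt_mul_of_pos_left ha hs)
      (by rw [hnorm]; exact mul_lt_mul_of_pos_left h₂ hs),
    criticalDelay_real_mul hs, arg_real_mul _ hs, eq_div_iff hs.ne', mul_comm τ]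

/-- Correspondence between the curve `Γ_c(ψ; τ)` parametrized by the angular frequency and
the critical delay: `(s a, s w)` lies on `Γ_c(ψ; τ)` iff `s τ = τ_c(a, w)` and `Arg w = ψ`. -/
theorem gamma_c_correspondence (ψ : ℝ) (hψ : ψ ∈ Set.Ioc (-Real.pi) Real.pi)
    (τ : ℝ) (hτ : 0 < τ) (a : ℝ) (w : ℂ) (hw : w ≠ 0)
    (h₁ : w.re < a) (h₂ : a < ‖w‖) (s : ℝ) (hs : 0 < s) :
    (∃ Ω : ℝ, τ * Ω ∈ (if 0 ≤ ψ then Set.Ioo 0 ψ else Set.Ioo ψ 0) ∧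
        s * a = -Ω * Real.cot (τ * Ω - ψ) ∧
        (s : ℂ) * w = ((-Ω / Real.sin (τ * Ω - ψ) : ℝ) : ℂ) *
          Complex.exp (Complex.I * (ψ : ℂ))) ↔
      (s * τ = (|w.arg| - Real.arccos (a / ‖w‖)) /
          Real.sqrt ((‖w‖) ^ 2 - a ^ 2) ∧ w.arg = ψ) :=
  gamma_c_correspondence_general ψ hψ τ hτ a w h₁ h₂ s hs
end
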